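/- arXiv:2107.04102 — 6 statements merged into one kernel-verified Lean document; each statement's English description precedes it below -/
import Mathlib

section
/- Let R ⊆ S be a ring extension of commutative rings and let T, T' be intermediate rings (R ⊆ T, T' ⊆ S). Assume that MSupp_R(S/T) ∩ MSupp_R(T/R) = ∅, that MSupp_R(T'/R) = MSupp_R(T/R), and that MSupp_R(S/T') = MSupp_R(S/T). Then T = T'. -/
/-!
An element `x ∈ B \ A` has annihilator ideal `{s | s • x ∈ A}` which is proper, hence lies in
some maximal ideal `M`; then `M ∈ MSupp A B`. So `MSupp A B = ∅` exactly when `B ≤ A`.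
If `x ∈ T \ T'`, the resulting `M` lies in `MSupp T' ⊤ = MSupp T ⊤` and in `MSupp ⊥ T`,
contradicting the splitting of `R ⊆ S` at `T`; symmetrically for `x ∈ T' \ T`.
-/

variable {R S : Type*} [CommRing R] [CommRing S] [Algebra R S]

/-- For intermediate rings `A ≤ B` of the extension `R ⊆ S`, `MSupp A B` is the set of
maximal ideals `M` of `R` at which the localization of the `R`-module `B/A` is nonzero:
the class of `x ∈ B` is nonzero in `(B/A)_M` iff `s • x ∉ A` for all `s ∉ M`. -/
def MSupp (A B : Subalgebra R S) : Set (Ideal R) :=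
  {M | M.IsMaximal ∧ ∃ x ∈ B, ∀ s : R, s ∉ M → s • x ∉ A}

theorem Submodule.exists_isMaximal_forall_smul_notMem {M : Type*} [AddCommGroup M] [Module R M]
    {N : Submodule R M} {x : M} (hx : x ∉ N) :
    ∃ P : Ideal R, P.IsMaximal ∧ ∀ s : R, s ∉ P → s • x ∉ N := by
  have hcolon : N.colon {x} ≠ ⊤ := fun h ↦
    hx (one_smul R x ▸ mem_colon_singleton.mp (h ▸ Submodule.mem_top))
  obtain ⟨P, hP, hle⟩ := Ideal.exists_le_maximal _ hcolon
  exact ⟨P, hP, fun s hs hsx ↦ hs (hle (mem_colon_singleton.mpr hsx))⟩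

theorem MSupp_mono {A A' B B' : Subalgebra R S} (hA : A' ≤ A) (hB : B ≤ B') :
    MSupp A B ⊆ MSupp A' B' := by
  rintro M ⟨hM, x, hxB, hx⟩
  exact ⟨hM, x, hB hxB, fun s hs hsx ↦ hx s hs (hA hsx)⟩

theorem MSupp_eq_empty_iff_le {A B : Subalgebra R S} : MSupp A B = ∅ ↔ B ≤ A := by
  refine ⟨fun h x hxB ↦ ?_, fun h ↦ Set.eq_empty_of_forall_notMem ?_⟩
  · by_contra hxA
    obtain ⟨M, hM, hx⟩ :=
      Submodule.exists_isMaximal_forall_smul_notMem (N := Subalgebra.toSubmodule A) hxA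
    exact (Set.eq_empty_iff_forall_notMem.mp h) M ⟨hM, x, hxB, hx⟩
  · rintro M ⟨hM, x, hxB, hx⟩
    exact hx 1 hM.isPrime.one_notMem (by simpa using h hxB)

/-- If `R ⊆ S` splits at `T` (the maximal supports of `T/R` and `S/T` are disjoint), then `T`
is the unique intermediate ring with maximal supports `MSupp(T/R)` and `MSupp(S/T)`. -/
theorem eq_of_msupp_eq (T T' : Subalgebra R S)
    (hdisj : MSupp T (⊤ : Subalgebra R S) ∩ MSupp (⊥ : Subalgebra R S) T = ∅)
    (h1 : MSupp (⊥ : Subalgebra R S) T' = MSupp (⊥ : Subalgebra R S) T)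
    (h2 : MSupp T' (⊤ : Subalgebra R S) = MSupp T (⊤ : Subalgebra R S)) :
    T = T' := by
  have hle : T ≤ T' := MSupp_eq_empty_iff_le.mp <| Set.subset_eq_empty
    (Set.subset_inter (MSupp_mono le_rfl le_top) (MSupp_mono bot_le le_rfl)) (by rwa [h2])
  have hge : T' ≤ T := MSupp_eq_empty_iff_le.mp <| Set.subset_eq_empty
    (Set.subset_inter (MSupp_mono le_rfl le_top) (MSupp_mono bot_le le_rfl)) (by rwa [h1])
  exact le_antisymm hle hge
end

section
/- Let R ⊆ S be a ring extension of commutative rings that splits at an intermediate ring T (i.e., MSupp_R(T/R) ∩ MSupp_R(S/T) = ∅), and let T° be the complement of T (so T ∩ T° = R and T·T° = S, with T°_M = R_M for M ∈ MSupp_R(T/R) and T°_M = S_M otherwise). Then for any intermediate rings U, V with R ⊆ U, V ⊆ T°, the equality U·T = V·T implies U = V. -/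
/-!
Locally at a maximal ideal `M` of `R` one of `T`, `T'` is trivial. If `T_M = R_M`, then
`U_M = (U ⊔ T)_M ≤ (V ⊔ T)_M = V_M`; otherwise `M ∈ MSupp(T/R)`, so `T'_M = R_M` and
`U_M = R_M ≤ V_M`. Hence `U ≤ V` locally everywhere, thus globally, and symmetrically.
-/

variable {R S : Type*} [CommRing R] [CommRing S] [Algebra R S]

namespace Subalgebra

/-- For `W = M.primeCompl` this is the preimage in `S` of the localization `A_M ⊆ S_M`. -/
def smulSaturation (A : Subalgebra R S) (W : Submonoid R) : Subalgebra R S where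
  carrier := {x | ∃ s ∈ W, s • x ∈ A}
  add_mem' := by
    rintro x y ⟨s, hs, hsx⟩ ⟨t, ht, hty⟩
    refine ⟨s * t, W.mul_mem hs ht, ?_⟩
    rw [smul_add, mul_comm s t, mul_smul, mul_comm t s, mul_smul]
    exact add_mem (A.smul_mem hsx t) (A.smul_mem hty s)
  mul_mem' := by
    rintro x y ⟨s, hs, hsx⟩ ⟨t, ht, hty⟩
    exact ⟨s * t, W.mul_mem hs ht, by rw [← smul_mul_smul_comm]; exact mul_mem hsx hty⟩
  algebraMap_mem' r := ⟨1, W.one_mem, by rw [one_smul]; exact A.algebraMap_mem r⟩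

variable {A B : Subalgebra R S} {W : Submonoid R}

theorem le_smulSaturation : A ≤ A.smulSaturation W :=
  fun x hx => ⟨1, W.one_mem, by rwa [one_smul]⟩

theorem smulSaturation_mono (h : A ≤ B) : A.smulSaturation W ≤ B.smulSaturation W :=
  fun _ ⟨s, hs, hsx⟩ => ⟨s, hs, h hsx⟩

theorem mem_of_forall_isMaximal_mem_smulSaturation {x : S}
    (h : ∀ (M : Ideal R) [M.IsMaximal], x ∈ A.smulSaturation M.primeCompl) : x ∈ A := by
  let I : Ideal R := Submodule.colon (Subalgebra.toSubmodule A) {x}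
  suffices I = ⊤ by
    simpa [I] using I.eq_top_iff_one.mp this
  by_contra hI
  obtain ⟨M, hM, hIM⟩ := I.exists_le_maximal hI
  obtain ⟨s, hs, hsx⟩ := h M
  exact hs (hIM (Submodule.mem_colon_singleton.mpr hsx))

theorem le_bot_smulSaturation_of_notMem_MSupp {T : Subalgebra R S} {M : Ideal R} [M.IsMaximal]
    (hMT : M ∉ MSupp ⊥ T) : T ≤ (⊥ : Subalgebra R S).smulSaturation M.primeCompl := by
  intro t ht
  by_contra hc
  exact hMT ⟨‹_›, t, ht, fun s hs hst => hc ⟨s, hs, hst⟩⟩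

theorem le_of_sup_le_sup {T T' U V : Subalgebra R S}
    (hR : ∀ (M : Ideal R) [M.IsMaximal], M ∈ MSupp ⊥ T →
      T' ≤ (⊥ : Subalgebra R S).smulSaturation M.primeCompl)
    (hU : U ≤ T') (h : U ⊔ T ≤ V ⊔ T) : U ≤ V := by
  intro x hx
  refine mem_of_forall_isMaximal_mem_smulSaturation fun M _ => ?_
  by_cases hMT : M ∈ MSupp ⊥ T
  · exact smulSaturation_mono bot_le (hR M hMT (hU hx))
  · have hT : T ≤ V.smulSaturation M.primeCompl :=
      (le_bot_smulSaturation_of_notMem_MSupp hMT).trans (smulSaturation_mono bot_le)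
    exact sup_le le_smulSaturation hT (h (le_sup_left (b := T) hx))

end Subalgebra

theorem cancel_sup_general (T T' : Subalgebra R S)
    (hR : ∀ M ∈ MSupp (⊥ : Subalgebra R S) T, ∀ x ∈ T', ∃ s : R, s ∉ M ∧
      s • x ∈ (⊥ : Subalgebra R S))
    (U V : Subalgebra R S) (hU : U ≤ T') (hV : V ≤ T')
    (h : U ⊔ T = V ⊔ T) : U = V := by
  have hR' : ∀ (M : Ideal R) [M.IsMaximal], M ∈ MSupp ⊥ T →
      T' ≤ (⊥ : Subalgebra R S).smulSaturation M.primeCompl :=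
    fun M _ hM => hR M hM
  exact le_antisymm (Subalgebra.le_of_sup_le_sup hR' hU h.le)
    (Subalgebra.le_of_sup_le_sup hR' hV h.ge)

/-- If `R ⊆ S` splits at `T` with complement `T'`, then for `U, V ∈ [R, T']`,
`U·T = V·T` implies `U = V`. -/
theorem cancel_sup (T T' : Subalgebra R S)
    (hsplit : MSupp (⊥ : Subalgebra R S) T ∩ MSupp T (⊤ : Subalgebra R S) = ∅)
    (hR : ∀ M ∈ MSupp (⊥ : Subalgebra R S) T, ∀ x ∈ T', ∃ s : R, s ∉ M ∧
      s • x ∈ (⊥ : Subalgebra R S))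
    (hS : ∀ M : Ideal R, M.IsMaximal → M ∉ MSupp (⊥ : Subalgebra R S) T →
      ∀ x : S, ∃ s : R, s ∉ M ∧ s • x ∈ T')
    (U V : Subalgebra R S) (hU : U ≤ T') (hV : V ≤ T')
    (h : U ⊔ T = V ⊔ T) : U = V :=
  cancel_sup_general T T' hR U V hU hV h
end

section
/- Let R ⊆ S be a ring extension that splits at an intermediate ring T (i.e., MSupp_R(T/R) ∩ MSupp_R(S/T) = ∅), with complement T° (satisfying T°_M = R_M for M ∈ MSupp_R(T/R) and T°_M = S_M for all other maximal ideals M of R). Then T° = { x ∈ S : T ∩ Rx ⊆ R }, where Rx is the cyclic R-submodule of S generated by x. -/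
/-! Both inclusions are checked locally at each maximal ideal `M` of `R`. Where `T` differs
from `R`, the complement agrees with `R` and `S` agrees with `T`, so `T ∩ Rx ⊆ R` says
`x ∈ R` there; elsewhere `T` agrees with `R` and the complement with `S`, so both sides
hold trivially. -/

variable {R S : Type*} [CommRing R] [CommRing S] [Algebra R S]

theorem Submodule.mem_of_forall_isMaximal_exists_smul_mem {A M : Type*} [CommSemiring A]
    [AddCommMonoid M] [Module A M] {N : Submodule A M} {y : M}
    (h : ∀ P : Ideal A, P.IsMaximal → ∃ s ∉ P, s • y ∈ N) : y ∈ N := by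
  by_contra hy
  have hI : N.comap (LinearMap.toSpanSingleton A M y) ≠ ⊤ := fun hI =>
    hy (by simpa using (Ideal.eq_top_iff_one _).mp hI)
  obtain ⟨P, hP, hle⟩ := Ideal.exists_le_maximal _ hI
  obtain ⟨s, hs, hsy⟩ := h P hP
  exact hs (hle hsy)

theorem exists_smul_mem_of_notMem_MSupp {A B : Subalgebra R S} {M : Ideal R}
    (hM : M.IsMaximal) (hMB : M ∉ MSupp A B) {x : S} (hx : x ∈ B) : ∃ s ∉ M, s • x ∈ A := by
  by_contra! h
  exact hMB ⟨hM, x, hx, h⟩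

/-- If `R ⊆ S` splits at `T` with complement `T'`, then
`T' = { x ∈ S : T ∩ Rx ⊆ R }`. -/
theorem complement_eq (T T' : Subalgebra R S)
    (hsplit : MSupp (⊥ : Subalgebra R S) T ∩ MSupp T (⊤ : Subalgebra R S) = ∅)
    (hR : ∀ M ∈ MSupp (⊥ : Subalgebra R S) T, ∀ x ∈ T', ∃ s : R, s ∉ M ∧
      s • x ∈ (⊥ : Subalgebra R S))
    (hS : ∀ M : Ideal R, M.IsMaximal → M ∉ MSupp (⊥ : Subalgebra R S) T →
      ∀ x : S, ∃ s : R, s ∉ M ∧ s • x ∈ T') :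
    ∀ x : S, x ∈ T' ↔
      Subalgebra.toSubmodule T ⊓ Submodule.span R {x} ≤
        Subalgebra.toSubmodule (⊥ : Subalgebra R S) := by
  intro x
  constructor
  · intro hx y ⟨hyT, hyx⟩
    obtain ⟨r, rfl⟩ := Submodule.mem_span_singleton.mp hyx
    refine Submodule.mem_of_forall_isMaximal_exists_smul_mem fun M hM => ?_
    by_cases hMT : M ∈ MSupp ⊥ T
    · obtain ⟨s, hs, hsx⟩ := hR M hMT x hx
      exact ⟨s, hs, smul_comm s r x ▸ Submodule.smul_mem _ r hsx⟩
    · exact exists_smul_mem_of_notMem_MSupp hM hMT hyT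
  · intro hle
    refine Submodule.mem_of_forall_isMaximal_exists_smul_mem
      (N := Subalgebra.toSubmodule T') fun M hM => ?_
    by_cases hMT : M ∈ MSupp ⊥ T
    · have hMS : M ∉ MSupp T ⊤ := fun hMS => hsplit.subset ⟨hMT, hMS⟩
      obtain ⟨s, hs, hsx⟩ := exists_smul_mem_of_notMem_MSupp hM hMS Algebra.mem_top
      have hsx_span : s • x ∈ Submodule.span R {x} :=
        Submodule.smul_mem _ s (Submodule.mem_span_singleton_self x)
      exact ⟨s, hs, (bot_le : ⊥ ≤ T') (hle ⟨hsx, hsx_span⟩)⟩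
    · exact hS M hM hMT x
end

section
/- Let R ⊆ S be a ring extension with conductor I := (R : \overline{R}) of R in its integral closure \overline{R} in S, and assume that R/I is an Artinian ring with maximal ideals M₁/I, …, M_n/I. For every y ∈ S the following holds: y belongs to ⋂_{i=1}^{n} R_{[M_i]} if and only if y belongs to R_{[1+I]} := { x ∈ S : (1+a)x ∈ R for some a ∈ I }. -/
/-!
Both sides say that the ideal `J = {r ∈ R | r • y ∈ R}` of denominators of `y` lies in no
maximal ideal containing `I`: on the left because those maximal ideals are the `Mᵢ`, on the
right because `J ⊔ I = ⊤` is the same as `1 + a ∈ J` for some `a ∈ I`.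
-/

variable {R S : Type*} [CommRing R] [CommRing S] [Algebra R S]

theorem Ideal.exists_one_add_mem_iff {I J : Ideal R} :
    (∃ a ∈ I, 1 + a ∈ J) ↔ ∀ N : Ideal R, N.IsMaximal → I ≤ N → ¬J ≤ N := by
  constructor
  · rintro ⟨a, ha, haJ⟩ N hN hIN hJN
    exact hN.ne_top <| N.eq_top_iff_one.mpr <| (N.add_mem_iff_left (hIN ha)).mp (hJN haJ)
  · intro h
    have hIJ : IsCoprime I J := by
      rw [Ideal.isCoprime_iff_sup_eq]
      by_contra hne
      obtain ⟨N, hN, hle⟩ := Ideal.exists_le_maximal _ hne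
      exact h N hN (le_sup_left.trans hle) (le_sup_right.trans hle)
    obtain ⟨i, hi, j, hj, hij⟩ := Ideal.isCoprime_iff_exists.mp hIJ
    exact ⟨-i, I.neg_mem hi, by rwa [← hij, add_neg_cancel_comm]⟩

theorem mem_inter_iff_mem_one_add_general (I : Ideal R)
    (n : ℕ) (M : Fin n → Ideal R)
    (hmax : ∀ i, (M i).IsMaximal) (hle : ∀ i, I ≤ M i)
    (hall : ∀ N : Ideal R, N.IsMaximal → I ≤ N → ∃ i, N = M i)
    (y : S) :
    (∀ i, ∃ s : R, s ∉ M i ∧ s • y ∈ (⊥ : Subalgebra R S)) ↔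
      ∃ a ∈ I, (1 + a) • y ∈ (⊥ : Subalgebra R S) := by
  set J : Ideal R := (Subalgebra.toSubmodule (⊥ : Subalgebra R S)).colon {y}
  have hJ : ∀ r : R, r • y ∈ (⊥ : Subalgebra R S) ↔ r ∈ J := fun _ ↦
    (Subalgebra.mem_toSubmodule _).symm.trans Submodule.mem_colon_singleton.symm
  have hnot_le : ∀ i, (∃ s : R, s ∉ M i ∧ s ∈ J) ↔ ¬J ≤ M i := fun i ↦ by
    rw [SetLike.not_le_iff_exists]
    exact exists_congr fun _ ↦ and_comm
  simp only [hJ, hnot_le, Ideal.exists_one_add_mem_iff]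
  constructor
  · intro h N hN hIN
    obtain ⟨i, rfl⟩ := hall N hN hIN
    exact h i
  · exact fun h i ↦ h (M i) (hmax i) (hle i)

/-- Let `I = (R : R̄)` be the conductor of `R` in its integral closure `R̄` in `S`, with
`R/I` Artinian with maximal ideals `M₁/I, …, Mₙ/I`. Then for `y ∈ S`:
`y ∈ ⋂ R_{[Mᵢ]}` iff `y ∈ R_{[1+I]}`. -/
theorem mem_inter_iff_mem_one_add (I : Ideal R)
    (hI : I = Submodule.colon
      (Subalgebra.toSubmodule (⊥ : Subalgebra R S))
      (Subalgebra.toSubmodule (integralClosure R S)))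
    (hArt : IsArtinianRing (R ⧸ I))
    (n : ℕ) (M : Fin n → Ideal R)
    (hmax : ∀ i, (M i).IsMaximal) (hle : ∀ i, I ≤ M i)
    (hall : ∀ N : Ideal R, N.IsMaximal → I ≤ N → ∃ i, N = M i)
    (y : S) :
    (∀ i, ∃ s : R, s ∉ M i ∧ s • y ∈ (⊥ : Subalgebra R S)) ↔
      ∃ a ∈ I, (1 + a) • y ∈ (⊥ : Subalgebra R S) :=
  mem_inter_iff_mem_one_add_general I n M hmax hle hall y
end

section
/- Let R ⊆ S be a ring extension which is a flat epimorphism in the category of commutative rings (i.e., the inclusion R → S is a flat ring epimorphism). Then for every prime ideal P of R: R_P ≠ S_P (i.e., P lies in the support of the R-module S/R) if and only if PS = S. Moreover, if PS ≠ S then the canonical map R_P → S_P is an isomorphism. -/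
/-!
Since `R → S` is an epimorphism, `s ⊗ 1 = 1 ⊗ s` in `S ⊗_R S`, so `S ⊗_R (S/R) = 0`. As `S` is
flat, the cyclic submodule `R/ann(c) ⊆ S/R` also dies after tensoring with `S`, i.e. `ann(c) S = S`
for every `c ∈ S/R`. So if `PS ≠ S`, no `ann(c)` lies in `P`: every `x ∈ S` has some `s ∉ P` with
`s x ∈ R`, which is surjectivity of `R_P → S_P`; injectivity is inherited from `R ⊆ S`. Conversely,
if `R_P → S_P` is bijective then `P S_P` is the image of the maximal ideal `P R_P`, so `PS ≠ S`.
-/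

open TensorProduct

universe u

variable {R S : Type u} [CommRing R] [CommRing S] [Algebra R S]

theorem Algebra.TensorProduct.includeLeft_surjective_of_epi
    (hepi : ∀ (T : Type u) [CommRing T] (g h : S →+* T),
      g.comp (algebraMap R S) = h.comp (algebraMap R S) → g = h) :
    Function.Surjective (Algebra.TensorProduct.includeLeft : S →ₐ[R] S ⊗[R] S) := by
  have hswap (s : S) : s ⊗ₜ[R] (1 : S) = 1 ⊗ₜ s :=
    RingHom.congr_fun (hepi _
      ((Algebra.TensorProduct.includeLeft : S →ₐ[R] S ⊗[R] S) : S →+* S ⊗[R] S)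
      ((Algebra.TensorProduct.includeRight : S →ₐ[R] S ⊗[R] S) : S →+* S ⊗[R] S)
      (AlgHom.comp_algebraMap _ |>.trans (AlgHom.comp_algebraMap _).symm)) s
  intro z
  induction z using TensorProduct.induction_on with
  | zero => exact ⟨0, map_zero _⟩
  | tmul s t =>
    refine ⟨s * t, ?_⟩
    calc (s * t) ⊗ₜ[R] (1 : S) = (s ⊗ₜ[R] 1) * (t ⊗ₜ[R] 1) := by
          rw [Algebra.TensorProduct.tmul_mul_tmul, mul_one]
      _ = s ⊗ₜ t := by rw [hswap t, Algebra.TensorProduct.tmul_mul_tmul, mul_one, one_mul]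
  | add a b ha hb =>
    obtain ⟨a, rfl⟩ := ha
    obtain ⟨b, rfl⟩ := hb
    exact ⟨a + b, map_add _ _ _⟩

theorem subsingleton_tensor_quotient_bot
    (h : Function.Surjective (Algebra.TensorProduct.includeLeft : S →ₐ[R] S ⊗[R] S)) :
    Subsingleton (S ⊗[R] (S ⧸ Subalgebra.toSubmodule (⊥ : Subalgebra R S))) := by
  set K := Subalgebra.toSubmodule (⊥ : Subalgebra R S)
  refine subsingleton_of_forall_eq 0 fun z => ?_
  obtain ⟨w, rfl⟩ := LinearMap.lTensor_surjective S K.mkQ_surjective z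
  obtain ⟨s, rfl⟩ := h w
  have h1 : K.mkQ 1 = 0 := (Submodule.Quotient.mk_eq_zero K).mpr (Subalgebra.one_mem _)
  simp [h1]

theorem Ideal.map_torsionOf_eq_top_of_subsingleton_tensor {A M : Type*} [CommRing A]
    [Algebra R A] [Module.Flat R A] [AddCommGroup M] [Module R M] [Subsingleton (A ⊗[R] M)]
    (m : M) : (Ideal.torsionOf R M m).map (algebraMap R A) = ⊤ := by
  set I := Ideal.torsionOf R M m
  let f : (R ⧸ I) →ₗ[R] M :=
    (R ∙ m).subtype ∘ₗ (quotTorsionOfEquivSpanSingleton R M m).toLinearMap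
  have hf : Function.Injective f :=
    (Submodule.injective_subtype _).comp (LinearEquiv.injective _)
  have : Subsingleton (A ⊗[R] (R ⧸ I)) :=
    (Module.Flat.lTensor_preserves_injective_linearMap f hf).subsingleton
  have : Subsingleton (A ⧸ I.map (algebraMap R A)) :=
    (Algebra.TensorProduct.quotIdealMapEquivTensorQuot A I).injective.subsingleton
  exact Ideal.Quotient.subsingleton_iff.mp this

theorem exists_smul_mem_bot_of_map_ne_top [Module.Flat R S]
    (h : Function.Surjective (Algebra.TensorProduct.includeLeft : S →ₐ[R] S ⊗[R] S))
    {I : Ideal R} (hI : I.map (algebraMap R S) ≠ ⊤) (x : S) :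
    ∃ s : R, s ∉ I ∧ s • x ∈ (⊥ : Subalgebra R S) := by
  set K := Subalgebra.toSubmodule (⊥ : Subalgebra R S)
  have := subsingleton_tensor_quotient_bot h
  have htop := Ideal.map_torsionOf_eq_top_of_subsingleton_tensor (R := R) (A := S) (K.mkQ x)
  obtain ⟨s, hs, hsI⟩ := SetLike.not_le_iff_exists.mp fun hle =>
    hI (top_le_iff.mp (htop ▸ Ideal.map_mono hle))
  refine ⟨s, hsI, ?_⟩
  rwa [Ideal.mem_torsionOf_iff, ← map_smul, Submodule.mkQ_apply,
    Submodule.Quotient.mk_eq_zero] at hs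

theorem IsLocalization.map_surjective_of_forall_exists_smul_mem_bot (M : Submonoid R)
    (h : ∀ x : S, ∃ s ∈ M, s • x ∈ (⊥ : Subalgebra R S)) :
    Function.Surjective
      (IsLocalization.map (Localization (M.map (algebraMap R S))) (algebraMap R S)
        M.le_comap_map : Localization M →+* _) := by
  intro y
  obtain ⟨x, ⟨_, t, ht, rfl⟩, rfl⟩ :=
    IsLocalization.exists_mk'_eq (M.map (algebraMap R S)) y
  obtain ⟨s, hs, hsx⟩ := h x
  obtain ⟨r, hr⟩ := Algebra.mem_bot.mp hsx
  refine ⟨IsLocalization.mk' _ r ⟨s * t, M.mul_mem hs ht⟩, ?_⟩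
  rw [IsLocalization.map_mk', IsLocalization.mk'_eq_iff_eq]
  congr 1
  rw [Algebra.smul_def] at hr
  change algebraMap R S t * algebraMap R S r = algebraMap R S (s * t) * x
  rw [hr, map_mul]
  ring

theorem Ideal.map_ne_top_of_bijective_localization_map (P : Ideal R) [P.IsPrime]
    (h : Function.Bijective
      (IsLocalization.map (Localization (P.primeCompl.map (algebraMap R S))) (algebraMap R S)
        P.primeCompl.le_comap_map : Localization.AtPrime P →+* _)) :
    P.map (algebraMap R S) ≠ ⊤ := by
  intro htop
  set φ : Localization.AtPrime P →+* Localization (P.primeCompl.map (algebraMap R S)) :=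
    IsLocalization.map _ (algebraMap R S) P.primeCompl.le_comap_map
  have hmax : (IsLocalRing.maximalIdeal (Localization.AtPrime P)).map φ = ⊤ := by
    rw [← IsLocalization.AtPrime.map_eq_maximalIdeal P, Ideal.map_map, IsLocalization.map_comp,
      ← Ideal.map_map, htop, Ideal.map_top]
  exact IsLocalRing.maximalIdeal.isMaximal _ |>.ne_top <|
    (Ideal.map_eq_top_of_bijective _ h).mp hmax

/-- For a flat epimorphic extension `R ⊆ S` and a prime `P` of `R`: `(S/R)_P ≠ 0` iff
`PS = S`; and if `PS ≠ S` then the canonical map `R_P → S_P` is an isomorphism. -/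
theorem flat_epi_support (hinj : Function.Injective (algebraMap R S))
    [Module.Flat R S]
    (hepi : ∀ (T : Type u) [CommRing T] (g h : S →+* T),
      g.comp (algebraMap R S) = h.comp (algebraMap R S) → g = h)
    (P : Ideal R) (hP : P.IsPrime) :
    ((∃ x : S, ∀ s : R, s ∉ P → s • x ∉ (⊥ : Subalgebra R S)) ↔
      Ideal.map (algebraMap R S) P = ⊤) ∧
    (Ideal.map (algebraMap R S) P ≠ ⊤ →
      Function.Bijective
        (IsLocalization.map
          (Localization (Submonoid.map (algebraMap R S) P.primeCompl))
          (algebraMap R S)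
          (Submonoid.le_comap_map P.primeCompl) :
          Localization.AtPrime P →+* _)) := by
  have hsurj := Algebra.TensorProduct.includeLeft_surjective_of_epi hepi
  have hbij (h : ∀ x : S, ∃ s ∈ P.primeCompl, s • x ∈ (⊥ : Subalgebra R S)) :
      Function.Bijective (IsLocalization.map _ _ P.primeCompl.le_comap_map :
        Localization.AtPrime P →+* Localization (P.primeCompl.map (algebraMap R S))) :=
    ⟨IsLocalization.map_injective_of_injective P.primeCompl _ _ hinj,
      IsLocalization.map_surjective_of_forall_exists_smul_mem_bot _ h⟩
  refine ⟨⟨fun ⟨x, hx⟩ => ?_, fun htop => ?_⟩,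
    fun hne => hbij (exists_smul_mem_bot_of_map_ne_top hsurj hne)⟩
  · by_contra hne
    obtain ⟨s, hs, hsx⟩ := exists_smul_mem_bot_of_map_ne_top hsurj hne x
    exact hx s hs hsx
  · by_contra! h
    exact Ideal.map_ne_top_of_bijective_localization_map P (hbij h) htop
end

section
/- Let R ⊆ S be a ring extension, and let T and U be splitters at subsets X and Y of MSupp_R(S/R), respectively. If the intersection T ∩ U is a splitter at some subset Z of MSupp_R(S/R), then Z = X ∩ Y; in particular, if X ∩ Y = ∅ and T ∩ U is a splitter, then T ∩ U = R. -/
/-!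
At a maximal ideal `M`, if `s ∉ M` moves `x` into `T` and `t ∉ M` moves `s • x` into `U`, then
`t * s ∉ M` moves `x` into `T ⊓ U`. So `MSupp(S/(T ⊓ U)) ⊆ MSupp(S/T) ∪ MSupp(S/U)`, which misses
`X ∩ Y`, forcing `X ∩ Y ⊆ Z`; the reverse inclusion is monotonicity of `MSupp` in the upper ring.
An extension `A ≤ B` with empty maximal support is trivial: for `x ∈ B \ A` the colon ideal
`(A : x)` is proper, and a maximal ideal containing it lies in `MSupp A B`.
-/

variable {R S : Type*} [CommRing R] [CommRing S] [Algebra R S]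

/-- `T` is the splitter of `R ⊆ S` at `X`: `MSupp(T/R) = X` and `MSupp(S/T)` is the
complement of `X` in `MSupp(S/R)`. -/
def IsSplitter (T : Subalgebra R S) (X : Set (Ideal R)) : Prop :=
  MSupp (⊥ : Subalgebra R S) T = X ∧
    MSupp T (⊤ : Subalgebra R S) =
      MSupp (⊥ : Subalgebra R S) (⊤ : Subalgebra R S) \ X

theorem mSupp_mono_right {A B B' : Subalgebra R S} (h : B ≤ B') : MSupp A B ⊆ MSupp A B' :=
  fun _ ⟨hM, x, hx, hxM⟩ => ⟨hM, x, h hx, hxM⟩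

theorem mSupp_inf_right_subset (A B C : Subalgebra R S) :
    MSupp A (B ⊓ C) ⊆ MSupp A B ∩ MSupp A C :=
  fun _ hM => ⟨mSupp_mono_right inf_le_left hM, mSupp_mono_right inf_le_right hM⟩

theorem mSupp_inf_left_subset (A A' B : Subalgebra R S) :
    MSupp (A ⊓ A') B ⊆ MSupp A B ∪ MSupp A' B := by
  rintro M ⟨hM, x, hx, hxM⟩
  by_contra hnot
  rw [Set.mem_union, not_or] at hnot
  obtain ⟨s, hs, hsA⟩ : ∃ s ∉ M, s • x ∈ A := by
    by_contra! h
    exact hnot.1 ⟨hM, x, hx, h⟩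
  obtain ⟨t, ht, htA'⟩ : ∃ t ∉ M, t • s • x ∈ A' := by
    by_contra! h
    exact hnot.2 ⟨hM, s • x, B.smul_mem hx s, h⟩
  refine hxM (t * s) (hM.isPrime.mul_notMem ht hs) ?_
  rw [mul_smul]
  exact ⟨A.smul_mem hsA t, htA'⟩

theorem le_of_mSupp_eq_empty {A B : Subalgebra R S} (h : MSupp A B = ∅) : B ≤ A := by
  intro x hx
  by_contra hxA
  have hcolon : (Subalgebra.toSubmodule A).colon {x} ≠ ⊤ := by
    intro htop
    have hone : (1 : R) ∈ (Subalgebra.toSubmodule A).colon {x} := htop ▸ Submodule.mem_top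
    rw [Submodule.mem_colon_singleton, one_smul] at hone
    exact hxA hone
  obtain ⟨M, hM, hcolonM⟩ := Ideal.exists_le_maximal _ hcolon
  have hMSupp : M ∈ MSupp A B :=
    ⟨hM, x, hx, fun s hs hsx => hs (hcolonM (Submodule.mem_colon_singleton.mpr hsx))⟩
  exact Set.notMem_empty M (h ▸ hMSupp)

theorem IsSplitter.subset_mSupp {T : Subalgebra R S} {X : Set (Ideal R)} (hT : IsSplitter T X) :
    X ⊆ MSupp (⊥ : Subalgebra R S) ⊤ :=
  hT.1 ▸ mSupp_mono_right le_top

theorem IsSplitter.eq_inter_of_inf {T U : Subalgebra R S} {X Y Z : Set (Ideal R)}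
    (hT : IsSplitter T X) (hU : IsSplitter U Y) (hTU : IsSplitter (T ⊓ U) Z) : Z = X ∩ Y := by
  refine subset_antisymm ?_ fun M ⟨hMX, hMY⟩ => ?_
  · rw [← hTU.1, ← hT.1, ← hU.1]
    exact mSupp_inf_right_subset _ _ _
  · by_contra hMZ
    have hM : M ∈ MSupp (T ⊓ U) ⊤ := hTU.2 ▸ ⟨hT.subset_mSupp hMX, hMZ⟩
    rcases mSupp_inf_left_subset T U ⊤ hM with hMT | hMU
    · exact (hT.2 ▸ hMT).2 hMX
    · exact (hU.2 ▸ hMU).2 hMY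

theorem splitter_inf_general (T U : Subalgebra R S) (X Y Z : Set (Ideal R))
    (hT : IsSplitter T X) (hU : IsSplitter U Y)
    (hTU : IsSplitter (T ⊓ U) Z) :
    Z = X ∩ Y ∧ (X ∩ Y = ∅ → T ⊓ U = ⊥) := by
  have hZ : Z = X ∩ Y := hT.eq_inter_of_inf hU hTU
  refine ⟨hZ, fun hXY => le_bot_iff.mp (le_of_mSupp_eq_empty ?_)⟩
  rw [hTU.1, hZ, hXY]

/-- For splitters `T = σ(X)` and `U = σ(Y)`: if `T ⊓ U` is a splitter at `Z`, then
`Z = X ∩ Y`; in particular, if `X ∩ Y = ∅` and `T ⊓ U` is a splitter, then `T ⊓ U = R`. -/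
theorem splitter_inf (T U : Subalgebra R S) (X Y Z : Set (Ideal R))
    (hX : X ⊆ MSupp (⊥ : Subalgebra R S) (⊤ : Subalgebra R S))
    (hY : Y ⊆ MSupp (⊥ : Subalgebra R S) (⊤ : Subalgebra R S))
    (hZ : Z ⊆ MSupp (⊥ : Subalgebra R S) (⊤ : Subalgebra R S))
    (hT : IsSplitter T X) (hU : IsSplitter U Y)
    (hTU : IsSplitter (T ⊓ U) Z) :
    Z = X ∩ Y ∧ (X ∩ Y = ∅ → T ⊓ U = ⊥) :=
  splitter_inf_general T U X Y Z hT hU hTU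
end
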